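/- Let μ, ν > 0 and let T be the operator given by (TΨ)(t) = μν·e^{μt}·I(Ψ) for t ≤ 0 and (TΨ)(t) = μν·e^{−νt}·I(Ψ) + 1 − e^{−νt} for t > 0, where I(Ψ) = ∫₀^∞∫₀^∞ Ψ(u − v)·e^{−μu−νv} du dv. Define Ψ₁(t) = (ν/(μ+ν))·e^{μt} for t ≤ 0, Ψ₁(t) = 1 − (μ/(μ+ν))·e^{−νt} for t > 0, and Ψ_{k+1} = TΨ_k for k ≥ 1. Then for every real t the sequence (Ψ_k(t))_{k≥1} converges, and its limit is Ψ(t) = (ν²/(μ²+ν²))·e^{μt} for t ≤ 0 and Ψ(t) = 1 − (μ²/(μ²+ν²))·e^{−νt} for t > 0. -/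

import Mathlib

/-!
Every output of `T` lies in the two-sided exponential family `φ_a = expProfile μ ν a`,
`φ_a(t) = a e^{μt}` for `t ≤ 0` and `φ_a(t) = 1 - (1 - a) e^{-νt}` for `t > 0`:
indeed `TΨ = φ_{μν I(Ψ)}`. Since `Ψ₁ = φ_{ν/(μ+ν)}`, every `Ψ_k` is some `φ_{a_k}`, and a direct
computation gives `μν I(φ_a) = r a + ν²/(μ+ν)²` with `r = 2μν/(μ+ν)² < 1`. So `a_k` is the orbit
of an affine contraction and converges to its fixed point `ν²/(μ²+ν²)`.
-/

open MeasureTheory Filter Set Real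

lemma integral_exp_neg_mul_Ioi {b : ℝ} (hb : 0 < b) (c : ℝ) :
    ∫ x in Ioi c, exp (-b * x) = exp (-b * c) / b := by
  rw [integral_exp_mul_Ioi (neg_neg_iff_pos.2 hb), neg_div_neg_eq]

lemma intervalIntegral_exp_neg_mul {b : ℝ} (hb : 0 < b) {u : ℝ} (hu : 0 ≤ u) :
    ∫ x in (0:ℝ)..u, exp (-b * x) = (1 - exp (-b * u)) / b := by
  rw [← intervalIntegral.integral_Ioi_sub_Ioi (exp_neg_integrableOn_Ioi 0 hb) hu,
    integral_exp_neg_mul_Ioi hb, integral_exp_neg_mul_Ioi hb, mul_zero, exp_zero, sub_div]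

lemma integrableOn_mul_exp_neg_mul_Ioi {b : ℝ} (hb : 0 < b) :
    IntegrableOn (fun x : ℝ => x * exp (-b * x)) (Ioi 0) := by
  simpa using integrableOn_rpow_mul_exp_neg_mul_rpow (s := 1) (p := 1) (by norm_num) one_pos hb

lemma integral_mul_exp_neg_mul_Ioi {b : ℝ} (hb : 0 < b) :
    ∫ x in Ioi (0:ℝ), x * exp (-b * x) = 1 / b ^ 2 := by
  have h := integral_rpow_mul_exp_neg_mul_Ioi two_pos hb
  norm_num [Gamma_two] at h
  simpa [neg_mul] using h

noncomputable def expProfile (μ ν a t : ℝ) : ℝ :=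
  if t ≤ 0 then a * exp (μ * t) else 1 - (1 - a) * exp (-ν * t)

variable {μ ν : ℝ}

lemma expProfile_apply_of_add_eq_one {a b : ℝ} (hab : a + b = 1) (t : ℝ) :
    expProfile μ ν a t = if t ≤ 0 then a * exp (μ * t) else 1 - b * exp (-ν * t) := by
  rw [expProfile, ← eq_sub_of_add_eq' hab]

lemma continuous_expProfile (t : ℝ) : Continuous fun a => expProfile μ ν a t := by
  unfold expProfile
  split_ifs <;> fun_prop

lemma integral_expProfile_sub_mul_exp (hμ : 0 < μ) (hν : 0 < ν) (a : ℝ) {u : ℝ}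
    (hu : 0 < u) :
    ∫ v in Ioi (0:ℝ), expProfile μ ν a (u - v) * exp (-μ * u - ν * v)
      = exp (-μ * u) / ν + (a / (μ + ν) - 1 / ν) * exp (-(μ + ν) * u)
        - (1 - a) * (u * exp (-(μ + ν) * u)) := by
  have hμν : 0 < μ + ν := add_pos hμ hν
  have hexp : exp (-μ * u) * exp (-ν * u) = exp (-(μ + ν) * u) := by
    rw [← exp_add]; ring_nf
  have hleft : EqOn (fun v => expProfile μ ν a (u - v) * exp (-μ * u - ν * v))
      (fun v => exp (-μ * u) * (exp (-ν * v) - (1 - a) * exp (-ν * u))) (Ioo 0 u) := by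
    intro v hv
    have : ¬ u - v ≤ 0 := by linarith [hv.2]
    simp only [expProfile, if_neg this]
    rw [show -μ * u - ν * v = -μ * u + -ν * v by ring, exp_add,
      show -ν * u = -ν * (u - v) + -ν * v by ring, exp_add]
    ring
  have hright : EqOn (fun v => expProfile μ ν a (u - v) * exp (-μ * u - ν * v))
      (fun v => a * exp (-(μ + ν) * v)) (Ioi u) := by
    intro v hv
    have : u - v ≤ 0 := by linarith [hv.out]
    simp only [expProfile, if_pos this]
    rw [mul_assoc, ← exp_add]
    ring_nf
  have hint_right :
      IntegrableOn (fun v => expProfile μ ν a (u - v) * exp (-μ * u - ν * v)) (Ioi u) :=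
    IntegrableOn.congr_fun ((exp_neg_integrableOn_Ioi u hμν).const_mul a) hright.symm
      measurableSet_Ioi
  rw [← intervalIntegral.integral_interval_add_Ioi' ?_ hint_right,
    intervalIntegral.integral_congr_Ioo_of_le hu.le hleft,
    setIntegral_congr_fun measurableSet_Ioi hright,
    intervalIntegral.integral_const_mul, intervalIntegral.integral_sub
      ((by fun_prop : Continuous fun v => exp (-ν * v)).intervalIntegrable 0 u)
      intervalIntegrable_const, intervalIntegral_exp_neg_mul hν hu.le,
    intervalIntegral.integral_const, integral_const_mul, integral_exp_neg_mul_Ioi hμν, ← hexp]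
  · simp only [sub_zero, smul_eq_mul]
    field_simp
    ring
  · exact (by fun_prop : Continuous _).intervalIntegrable 0 u |>.congr_uIoo
      ((uIoo_of_le hu.le).symm ▸ hleft.symm)

/-- The paper's `I(Ψ)`; `recursionOp` is its operator `T`. -/
noncomputable def recursionIntegral (μ ν : ℝ) (Ψ : ℝ → ℝ) : ℝ :=
  ∫ u in Ioi (0:ℝ), ∫ v in Ioi (0:ℝ), Ψ (u - v) * exp (-μ * u - ν * v)

noncomputable def recursionOp (μ ν : ℝ) (Ψ : ℝ → ℝ) (t : ℝ) : ℝ :=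
  if t ≤ 0 then μ * ν * exp (μ * t) * recursionIntegral μ ν Ψ
  else μ * ν * exp (-ν * t) * recursionIntegral μ ν Ψ + 1 - exp (-ν * t)

lemma recursionOp_eq_expProfile (Ψ : ℝ → ℝ) :
    recursionOp μ ν Ψ = expProfile μ ν (μ * ν * recursionIntegral μ ν Ψ) := by
  funext t
  unfold recursionOp expProfile
  split_ifs <;> ring

noncomputable def stepCoeff (μ ν a : ℝ) : ℝ :=
  2 * μ * ν / (μ + ν) ^ 2 * a + ν ^ 2 / (μ + ν) ^ 2

lemma recursionIntegral_expProfile (hμ : 0 < μ) (hν : 0 < ν) (a : ℝ) :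
    μ * ν * recursionIntegral μ ν (expProfile μ ν a) = stepCoeff μ ν a := by
  have hμν : 0 < μ + ν := add_pos hμ hν
  have i1 := (exp_neg_integrableOn_Ioi 0 hμ).div_const ν
  have i2 := (exp_neg_integrableOn_Ioi 0 hμν).const_mul (a / (μ + ν) - 1 / ν)
  have i3 := (integrableOn_mul_exp_neg_mul_Ioi hμν).const_mul (1 - a)
  have i12 : IntegrableOn
      (fun u => exp (-μ * u) / ν + (a / (μ + ν) - 1 / ν) * exp (-(μ + ν) * u)) (Ioi 0) :=
    i1.add i2
  rw [recursionIntegral, setIntegral_congr_fun measurableSet_Ioi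
      fun u hu => integral_expProfile_sub_mul_exp hμ hν a hu,
    integral_sub i12 i3, integral_add i1 i2, integral_div, integral_const_mul,
    integral_const_mul, integral_exp_neg_mul_Ioi hμ, integral_exp_neg_mul_Ioi hμν,
    integral_mul_exp_neg_mul_Ioi hμν, stepCoeff]
  simp only [mul_zero, exp_zero]
  field_simp
  ring

lemma tendsto_of_affine_recurrence {r c : ℝ} (hr : |r| < 1) {x : ℕ → ℝ}
    (hx : ∀ n, x (n + 1) = r * x n + c) : Tendsto x atTop (nhds (c / (1 - r))) := by
  have hr1 : 1 - r ≠ 0 := by linarith [le_abs_self r]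
  have hclosed : ∀ n, x n = c / (1 - r) + r ^ n * (x 0 - c / (1 - r)) := by
    intro n
    induction n with
    | zero => ring
    | succ n ih => rw [hx, ih]; field_simp; ring
  have hpow := tendsto_pow_atTop_nhds_zero_of_abs_lt_one hr
  simpa [← hclosed] using (hpow.mul_const (x 0 - c / (1 - r))).const_add (c / (1 - r))

lemma tendsto_iterate_stepCoeff (hμ : 0 < μ) (hν : 0 < ν) (a₀ : ℝ) :
    Tendsto (fun n => (stepCoeff μ ν)^[n] a₀) atTop (nhds (ν ^ 2 / (μ ^ 2 + ν ^ 2))) := by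
  have hr : |2 * μ * ν / (μ + ν) ^ 2| < 1 := by
    rw [abs_of_nonneg (by positivity), div_lt_one (by positivity)]
    nlinarith [mul_pos hμ hμ, mul_pos hν hν]
  have hfix :
      ν ^ 2 / (μ + ν) ^ 2 / (1 - 2 * μ * ν / (μ + ν) ^ 2) = ν ^ 2 / (μ ^ 2 + ν ^ 2) := by
    rw [one_sub_div (by positivity), div_div_div_cancel_right₀ (by positivity)]
    ring_nf
  exact hfix ▸ tendsto_of_affine_recurrence hr fun n => Function.iterate_succ_apply' _ _ _

/-- The sequence `Ψ_k` produced by the one-step recursion operator starting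
from `Ψ₁` converges pointwise, with limit `Ψ(t) = (ν²/(μ²+ν²))e^{μt}` for `t ≤ 0` and
`Ψ(t) = 1 - (μ²/(μ²+ν²))e^{-νt}` for `t > 0`. -/
theorem psi_sequence_converges (μ ν : ℝ) (hμ : 0 < μ) (hν : 0 < ν)
    (Ψ : ℕ → ℝ → ℝ)
    (hΨ₁ : ∀ t : ℝ, Ψ 1 t = if t ≤ 0 then ν/(μ+ν) * Real.exp (μ*t)
      else 1 - μ/(μ+ν) * Real.exp (-ν*t))
    (hrec : ∀ k : ℕ, 1 ≤ k → ∀ t : ℝ, Ψ (k+1) t =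
      if t ≤ 0 then
        μ * ν * Real.exp (μ*t) *
          ∫ u in Set.Ioi (0:ℝ), ∫ v in Set.Ioi (0:ℝ), Ψ k (u - v) * Real.exp (-μ*u - ν*v)
      else
        μ * ν * Real.exp (-ν*t) *
          (∫ u in Set.Ioi (0:ℝ), ∫ v in Set.Ioi (0:ℝ), Ψ k (u - v) * Real.exp (-μ*u - ν*v))
          + 1 - Real.exp (-ν*t)) :
    ∀ t : ℝ, Tendsto (fun k : ℕ => Ψ k t) atTop
      (nhds (if t ≤ 0 then ν^2/(μ^2+ν^2) * Real.exp (μ*t)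
        else 1 - μ^2/(μ^2+ν^2) * Real.exp (-ν*t))) := by
  have hΨ : ∀ n, Ψ (n + 1) = expProfile μ ν ((stepCoeff μ ν)^[n] (ν / (μ + ν))) := by
    intro n
    induction n with
    | zero =>
      funext t
      rw [hΨ₁, Function.iterate_zero_apply,
        expProfile_apply_of_add_eq_one (b := μ / (μ + ν)) (by field_simp; ring)]
    | succ n ih =>
      funext t
      rw [hrec (n + 1) n.succ_pos t]
      change recursionOp μ ν (Ψ (n + 1)) t = _
      rw [ih, recursionOp_eq_expProfile, recursionIntegral_expProfile hμ hν,
        Function.iterate_succ_apply']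
  intro t
  have hsum : ν ^ 2 / (μ ^ 2 + ν ^ 2) + μ ^ 2 / (μ ^ 2 + ν ^ 2) = 1 := by
    rw [← add_div, add_comm, div_self (by positivity)]
  rw [← expProfile_apply_of_add_eq_one hsum, ← tendsto_add_atTop_iff_nat 1]
  simp_rw [hΨ]
  exact (continuous_expProfile t).tendsto _ |>.comp (tendsto_iterate_stepCoeff hμ hν _)
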